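/- arXiv:1612.02241 — 4 statements merged into one kernel-verified Lean document; each statement's English description precedes it below -/
import Mathlib

section
/- A Young diagram α is symmetric, i.e. αᵀ = α, if and only if tail(α) = (head α)ᵀ. -/
/-- A Young diagram, identified with its weakly decreasing sequence of row lengths
(indexed from 0), which is eventually zero. -/
def IsYoungSeq (α : ℕ → ℕ) : Prop :=
  Antitone α ∧ ∃ N : ℕ, ∀ i : ℕ, N ≤ i → α i = 0

/-- The transpose of a Young diagram: the `j`-th column length is the number of rows
of length greater than `j`. -/
noncomputable def ytranspose (α : ℕ → ℕ) : ℕ → ℕ :=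
  fun j => {i : ℕ | j < α i}.ncard

/-- The diagonal length (size of the Durfee square) of a Young diagram: the number of
indices `i` with `αᵢ ≥ i` (in 1-indexed terms), i.e. the largest such `i`. -/
noncomputable def ydiag (α : ℕ → ℕ) : ℕ :=
  {i : ℕ | i < α i}.ncard

/-- The head of a Young diagram `α` with diagonal length `s`: the diagram
`(α₁ - s, …, α_s - s)`. -/
noncomputable def yhead (α : ℕ → ℕ) : ℕ → ℕ :=
  fun i => if i < ydiag α then α i - ydiag α else 0

/-- The tail of a Young diagram `α` with diagonal length `s`: the diagram
`(α_{s+1}, α_{s+2}, …)`. -/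
noncomputable def ytail (α : ℕ → ℕ) : ℕ → ℕ :=
  fun i => α (ydiag α + i)

/-- The number of boxes `|α|` of a Young diagram. -/
noncomputable def ysize (α : ℕ → ℕ) : ℕ :=
  {p : ℕ × ℕ | p.2 < α p.1}.ncard

/-- The horizontal `p`-expansion of a Young diagram `α` with diagonal length `s`:
`(α₁ + p, …, α_s + p, α_{s+1}, α_{s+2}, …)`. -/
noncomputable def yexpH (p : ℕ) (α : ℕ → ℕ) : ℕ → ℕ :=
  fun i => if i < ydiag α then α i + p else α i

/-- The vertical `p`-expansion of a Young diagram `α` with diagonal length `s`: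
`(α₁, …, α_s, s, …, s, α_{s+1}, …)` with `p` copies of `s` inserted after row `s`. -/
noncomputable def yexpV (p : ℕ) (α : ℕ → ℕ) : ℕ → ℕ :=
  fun i => if i < ydiag α then α i
    else if i < ydiag α + p then ydiag α
    else α (i - p)

section Aux

lemma dcSet_eq_Iio {S : Set ℕ} (hfin : S.Finite)
    (hdc : ∀ ⦃a b : ℕ⦄, a ≤ b → b ∈ S → a ∈ S) : S = Set.Iio S.ncard := by
  obtain ⟨n, hn⟩ : ∃ n, S = Set.Iio n := by
    rcases S.eq_empty_or_nonempty with h | h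
    · exact ⟨0, by rw [h]; ext a; simp⟩
    · refine ⟨hfin.toFinset.max' (by simpa using h) + 1, ?_⟩
      ext a
      simp only [Set.mem_Iio, Nat.lt_succ_iff]
      constructor
      · intro ha
        exact Finset.le_max' _ a (by simpa using ha)
      · intro ha
        exact hdc ha (by simpa using hfin.toFinset.max'_mem (by simpa using h))
  have hc : S.ncard = n := by
    rw [hn, ← Finset.coe_Iio, Set.ncard_coe_finset, Nat.card_Iio]
  rw [hn] at hc ⊢
  rw [hc]

lemma nat_eq_of_lt_iff {a b : ℕ} (h : ∀ k, k < a ↔ k < b) : a = b :=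
  le_antisymm (le_of_not_gt fun hb => lt_irrefl b ((h b).1 hb))
    (le_of_not_gt fun ha => lt_irrefl a ((h a).2 ha))

lemma transpose_lt {α : ℕ → ℕ} (hα : IsYoungSeq α) (i j : ℕ) :
    i < ytranspose α j ↔ j < α i := by
  obtain ⟨hmono, N, hN⟩ := hα
  have hfin : {i : ℕ | j < α i}.Finite := by
    apply Set.Finite.subset (Set.finite_Iio N)
    intro a ha
    simp only [Set.mem_Iio]
    by_contra hc
    push_neg at hc
    have := hN a hc
    simp only [Set.mem_setOf_eq, this] at ha
    omega
  have hdc : ∀ ⦃a b : ℕ⦄, a ≤ b → b ∈ {i : ℕ | j < α i} → a ∈ {i : ℕ | j < α i} := by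
    intro a b hab hb
    exact lt_of_lt_of_le hb (hmono hab)
  have := dcSet_eq_Iio hfin hdc
  constructor
  · intro h
    have : i ∈ {i : ℕ | j < α i} := by rw [this]; exact h
    exact this
  · intro h
    have h2 : i ∈ {i : ℕ | j < α i} := h
    rw [this] at h2
    exact h2

lemma diag_lt {α : ℕ → ℕ} (hα : IsYoungSeq α) (i : ℕ) :
    i < ydiag α ↔ i < α i := by
  obtain ⟨hmono, N, hN⟩ := hα
  have hfin : {i : ℕ | i < α i}.Finite := by
    apply Set.Finite.subset (Set.finite_Iio N)
    intro a ha
    simp only [Set.mem_Iio]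
    by_contra hc
    push_neg at hc
    have := hN a hc
    simp only [Set.mem_setOf_eq, this] at ha
    omega
  have hdc : ∀ ⦃a b : ℕ⦄, a ≤ b → b ∈ {i : ℕ | i < α i} → a ∈ {i : ℕ | i < α i} := by
    intro a b hab hb
    simp only [Set.mem_setOf_eq] at *
    calc a ≤ b := hab
    _ < α b := hb
    _ ≤ α a := hmono hab
  have heq := dcSet_eq_Iio hfin hdc
  constructor
  · intro h
    have : i ∈ {i : ℕ | i < α i} := by rw [heq]; exact h
    exact this
  · intro h
    have h2 : i ∈ {i : ℕ | i < α i} := h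
    rw [heq] at h2
    exact h2

lemma transpose_isYoung {α : ℕ → ℕ} (hα : IsYoungSeq α) : IsYoungSeq (ytranspose α) := by
  constructor
  · intro j j' hjj'
    apply le_of_not_gt
    intro hc
    have h2 := (transpose_lt hα (ytranspose α j) j').1 hc
    have h1 := (transpose_lt hα (ytranspose α j) j).2 (lt_of_le_of_lt hjj' h2)
    exact lt_irrefl _ h1
  · refine ⟨α 0, fun j hj => ?_⟩
    by_contra hc
    have h0 : 0 < ytranspose α j := Nat.pos_of_ne_zero hc
    have := (transpose_lt hα 0 j).1 h0
    omega

lemma transpose_transpose {α : ℕ → ℕ} (hα : IsYoungSeq α) :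
    ytranspose (ytranspose α) = α := by
  funext i
  apply nat_eq_of_lt_iff
  intro k
  rw [transpose_lt (transpose_isYoung hα), transpose_lt hα]

lemma ydiag_transpose {α : ℕ → ℕ} (hα : IsYoungSeq α) :
    ydiag (ytranspose α) = ydiag α := by
  apply nat_eq_of_lt_iff
  intro k
  rw [diag_lt (transpose_isYoung hα), transpose_lt hα, ← diag_lt hα, diag_lt hα]

lemma diag_le_alpha {α : ℕ → ℕ} (hα : IsYoungSeq α) {i : ℕ} (hi : i < ydiag α) :
    ydiag α ≤ α i := by
  have h1 : ydiag α - 1 < α (ydiag α - 1) := (diag_lt hα _).1 (by omega)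
  have h2 : α (ydiag α - 1) ≤ α i := hα.1 (by omega)
  omega

lemma alpha_le_diag {α : ℕ → ℕ} (hα : IsYoungSeq α) {i : ℕ} (hi : ydiag α ≤ i) :
    α i ≤ ydiag α := by
  have h1 : ¬ ydiag α < α (ydiag α) := by
    rw [← diag_lt hα]; omega
  have h2 : α i ≤ α (ydiag α) := hα.1 hi
  omega

lemma yhead_isYoung {α : ℕ → ℕ} (hα : IsYoungSeq α) : IsYoungSeq (yhead α) := by
  constructor
  · intro i j hij
    unfold yhead
    by_cases hj : j < ydiag α
    · have hi : i < ydiag α := lt_of_le_of_lt hij hj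
      simp only [if_pos hi, if_pos hj]
      have := hα.1 hij
      omega
    · simp only [if_neg hj]
      omega
  · refine ⟨ydiag α, fun i hi => ?_⟩
    unfold yhead
    rw [if_neg (by omega)]

lemma key_lemma {α : ℕ → ℕ} (hα : IsYoungSeq α) (j : ℕ) :
    ytranspose (yhead α) j = ytranspose α (ydiag α + j) := by
  unfold ytranspose
  congr 1
  ext i
  simp only [Set.mem_setOf_eq]
  unfold yhead
  by_cases hi : i < ydiag α
  · rw [if_pos hi]
    have := diag_le_alpha hα hi
    omega
  · rw [if_neg hi]
    have := alpha_le_diag hα (by omega : ydiag α ≤ i)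
    omega

end Aux

/-- A Young diagram `α` is symmetric (`αᵀ = α`) if and only if `tail α = (head α)ᵀ`. -/
theorem symmetric_iff_ytail_eq_ytranspose_yhead (α : ℕ → ℕ) (hα : IsYoungSeq α) :
    ytranspose α = α ↔ ytail α = ytranspose (yhead α) := by
  have s := ydiag α
  constructor
  · intro h
    funext j
    unfold ytail
    rw [key_lemma hα, h]
  · intro h
    have headeq : yhead (ytranspose α) = yhead α := by
      have hT := transpose_isYoung hα
      have step : ytranspose (yhead (ytranspose α)) = ytranspose (yhead α) := by
        funext j
        rw [key_lemma hT, ydiag_transpose hα, transpose_transpose hα]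
        have : α (ydiag α + j) = ytail α j := rfl
        rw [this, h]
      calc yhead (ytranspose α)
          = ytranspose (ytranspose (yhead (ytranspose α))) :=
            (transpose_transpose (yhead_isYoung hT)).symm
        _ = ytranspose (ytranspose (yhead α)) := by rw [step]
        _ = yhead α := transpose_transpose (yhead_isYoung hα)
    funext i
    by_cases hi : i < ydiag α
    · have h1 : yhead (ytranspose α) i = ytranspose α i - ydiag (ytranspose α) := by
        unfold yhead
        rw [if_pos (by rw [ydiag_transpose hα]; exact hi)]
      have h2 : yhead α i = α i - ydiag α := by
        unfold yhead; rw [if_pos hi]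
      have h3 := diag_le_alpha hα hi
      have h4 : ydiag (ytranspose α) ≤ ytranspose α i := by
        apply diag_le_alpha (transpose_isYoung hα)
        rw [ydiag_transpose hα]; exact hi
      have h5 := ydiag_transpose hα
      have := congrFun headeq i
      rw [h1, h2] at this
      omega
    · push_neg at hi
      have h1 : ytranspose α (ydiag α + (i - ydiag α)) = α (ydiag α + (i - ydiag α)) := by
        rw [← key_lemma hα]
        have : α (ydiag α + (i - ydiag α)) = ytail α (i - ydiag α) := rfl
        rw [this, h]
      have h2 : ydiag α + (i - ydiag α) = i := by omega
      rw [h2] at h1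
      exact h1
end

section
/- (Regularity analysis for the odd orthogonal Borel–Bott–Weil weight.) Let n ≥ 1 and k ≥ 1 be integers with N = 2n+1 ≥ 2k+2. Let β₁ ≥ β₂ ≥ ⋯ ≥ β_k ≥ 0 be integers with β₁ ≤ N−k, and define μ ∈ ℤⁿ by μᵢ = (n+1−i) − β_{k+1−i} for 1 ≤ i ≤ k and μᵢ = n+1−i for k+1 ≤ i ≤ n. Then the absolute values |μ₁|, …, |μₙ| are pairwise distinct and all nonzero if and only if there exists a symmetric Young diagram ν contained in the k×k square such that β is the horizontal (N−2k)-expansion of ν, i.e. βᵢ = νᵢ + (N−2k) for 1 ≤ i ≤ ℓ(ν) and βᵢ = νᵢ for ℓ(ν) < i ≤ k. -/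
open Finset

private lemma count_initial {a k : ℕ} (ha : 1 ≤ a) (P : ℕ → Prop) [DecidablePred P]
    (hP : ∀ i j : ℕ, a ≤ i → i ≤ j → j ≤ k → P j → P i)
    {i : ℕ} (hi1 : a ≤ i) (hik : i ≤ k) :
    i - a + 1 ≤ ((Finset.Icc a k).filter (fun j => P j)).card ↔ P i := by
  constructor
  · intro h
    by_contra hPi
    have hsub : (Finset.Icc a k).filter (fun j => P j) ⊆ Finset.Icc a (i-1) := by
      intro j hj
      simp only [mem_filter, mem_Icc] at hj ⊢
      refine ⟨hj.1.1, ?_⟩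
      by_contra hji
      push_neg at hji
      exact hPi (hP i j hi1 (by omega) hj.1.2 hj.2)
    have h2 := Finset.card_le_card hsub
    rw [Nat.card_Icc] at h2
    omega
  · intro h
    have hsub : Finset.Icc a i ⊆ (Finset.Icc a k).filter (fun j => P j) := by
      intro j hj
      simp only [mem_filter, mem_Icc] at hj ⊢
      exact ⟨⟨hj.1, hj.2.trans hik⟩, hP j i hj.1 hj.2 hik h⟩
    have h2 := Finset.card_le_card hsub
    rw [Nat.card_Icc] at h2
    omega

private lemma images_eq_le {s k : ℕ} (f g : ℕ → ℕ)
    (hf : ∀ a b : ℕ, s+1 ≤ a → a ≤ b → b ≤ k → f b ≤ f a)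
    (hg : ∀ a b : ℕ, s+1 ≤ a → a ≤ b → b ≤ k → g b ≤ g a)
    (hfs : ∀ a : ℕ, s+1 ≤ a → a ≤ k → f a ≤ s)
    (hgs : ∀ a : ℕ, s+1 ≤ a → a ≤ k → g a ≤ s)
    (him : (Finset.Icc (s+1) k).image (fun q => q - f q)
         = (Finset.Icc (s+1) k).image (fun q => q - g q))
    {q : ℕ} (hq1 : s+1 ≤ q) (hqk : q ≤ k) : g q ≤ f q := by
  set x := q - g q with hx
  -- the g-side filter is Icc (s+1) q
  have hCg : (Finset.Icc (s+1) k).filter (fun q' => q' - g q' ≤ x) = Finset.Icc (s+1) q := by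
    ext j
    simp only [mem_filter, mem_Icc]
    constructor
    · rintro ⟨⟨h1, h2⟩, h3⟩
      refine ⟨h1, ?_⟩
      by_contra hj
      push_neg at hj
      have := hg q j hq1 (by omega) h2
      have := hgs q hq1 hqk
      have := hgs j (by omega) h2
      omega
    · rintro ⟨h1, h2⟩
      refine ⟨⟨h1, h2.trans hqk⟩, ?_⟩
      have := hg j q h1 h2 hqk
      have := hgs j h1 (h2.trans hqk)
      have := hgs q hq1 hqk
      omega
  have hinjf : Set.InjOn (fun q' => q' - f q') (Finset.Icc (s+1) k) := by
    intro a ha b hb hab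
    simp only [coe_Icc, Set.mem_Icc] at ha hb
    simp only at hab
    rcases le_or_gt a b with h | h
    · have := hf a b ha.1 h hb.2
      have := hfs a ha.1 ha.2
      have := hfs b hb.1 hb.2
      omega
    · have := hf b a hb.1 h.le ha.2
      have := hfs a ha.1 ha.2
      have := hfs b hb.1 hb.2
      omega
  have hinjg : Set.InjOn (fun q' => q' - g q') (Finset.Icc (s+1) k) := by
    intro a ha b hb hab
    simp only [coe_Icc, Set.mem_Icc] at ha hb
    simp only at hab
    rcases le_or_gt a b with h | h
    · have := hg a b ha.1 h hb.2
      have := hgs a ha.1 ha.2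
      have := hgs b hb.1 hb.2
      omega
    · have := hg b a hb.1 h.le ha.2
      have := hgs a ha.1 ha.2
      have := hgs b hb.1 hb.2
      omega
  -- cardinalities of the two filters agree
  have key : ((Finset.Icc (s+1) k).filter (fun q' => q' - f q' ≤ x)).card
      = ((Finset.Icc (s+1) k).filter (fun q' => q' - g q' ≤ x)).card := by
    have h1 : (((Finset.Icc (s+1) k).filter (fun q' => q' - f q' ≤ x)).image
        (fun q' => q' - f q')) = ((Finset.Icc (s+1) k).image (fun q' => q' - f q')).filter
        (fun y => y ≤ x) := by
      rw [Finset.filter_image]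
    have h2 : (((Finset.Icc (s+1) k).filter (fun q' => q' - g q' ≤ x)).image
        (fun q' => q' - g q')) = ((Finset.Icc (s+1) k).image (fun q' => q' - g q')).filter
        (fun y => y ≤ x) := by
      rw [Finset.filter_image]
    have c1 : ((Finset.Icc (s+1) k).filter (fun q' => q' - f q' ≤ x)).card
        = (((Finset.Icc (s+1) k).image (fun q' => q' - f q')).filter (fun y => y ≤ x)).card := by
      rw [← h1]
      exact (Finset.card_image_of_injOn (hinjf.mono (by
        intro z hz; exact Finset.mem_coe.2 (Finset.mem_of_mem_filter z (Finset.mem_coe.1 hz))))).symm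
    have c2 : ((Finset.Icc (s+1) k).filter (fun q' => q' - g q' ≤ x)).card
        = (((Finset.Icc (s+1) k).image (fun q' => q' - g q')).filter (fun y => y ≤ x)).card := by
      rw [← h2]
      exact (Finset.card_image_of_injOn (hinjg.mono (by
        intro z hz; exact Finset.mem_coe.2 (Finset.mem_of_mem_filter z (Finset.mem_coe.1 hz))))).symm
    rw [c1, c2, him]
  rw [hCg, Nat.card_Icc] at key
  have hP : ∀ i j : ℕ, s+1 ≤ i → i ≤ j → j ≤ k → (j - f j ≤ x) → (i - f i ≤ x) := by
    intro i j hi hij hjk hPj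
    have := hf i j hi hij hjk
    omega
  have := (count_initial (a := s+1) (by omega) (k := k) (fun q' => q' - f q' ≤ x) hP hq1 hqk).1 (by omega)
  have := hgs q hq1 hqk
  omega

/-- Regularity analysis for the odd orthogonal Borel–Bott–Weil weight (type `B_n`).
Let `N = 2n+1 ≥ 2k+2`, let `β₁ ≥ ⋯ ≥ β_k ≥ 0` with `β₁ ≤ N-k`, and let
`μᵢ = (n+1-i) - β_{k+1-i}` for `1 ≤ i ≤ k`, `μᵢ = n+1-i` for `k+1 ≤ i ≤ n`.
Then the `|μᵢ|` are pairwise distinct and all nonzero if and only if there is a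
symmetric Young diagram `ν` in the `k × k` square (with diagonal length `s = ℓ(ν)`)
such that `β` is the horizontal `(N-2k)`-expansion of `ν`, i.e.
`βᵢ = νᵢ + (N-2k)` for `i ≤ s` and `βᵢ = νᵢ` for `s < i ≤ k`.
(Everything is 1-indexed.) -/
theorem bbw_regularity_odd_orthogonal
    (n k N : ℕ) (hn : 1 ≤ n) (hk : 1 ≤ k) (hN : N = 2 * n + 1) (hNk : 2 * k + 2 ≤ N)
    (β : ℕ → ℕ)
    (hβmono : ∀ i j : ℕ, 1 ≤ i → i ≤ j → j ≤ k → β j ≤ β i)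
    (hβ1 : β 1 ≤ N - k)
    (μ : ℕ → ℤ)
    (hμ1 : ∀ i : ℕ, 1 ≤ i → i ≤ k → μ i = ((n : ℤ) + 1 - i) - β (k + 1 - i))
    (hμ2 : ∀ i : ℕ, k + 1 ≤ i → i ≤ n → μ i = (n : ℤ) + 1 - i) :
    ((∀ i : ℕ, 1 ≤ i → i ≤ n → μ i ≠ 0) ∧
      (∀ i j : ℕ, 1 ≤ i → i < j → j ≤ n → |μ i| ≠ |μ j|)) ↔
    (∃ ν : ℕ → ℕ,
      -- ν is a Young diagram contained in the k × k square
      (∀ i j : ℕ, 1 ≤ i → i ≤ j → ν j ≤ ν i) ∧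
      (∀ i : ℕ, ν i ≤ k) ∧
      (∀ i : ℕ, k < i → ν i = 0) ∧
      -- ν is symmetric: ν = νᵀ
      (∀ i : ℕ, 1 ≤ i → i ≤ k →
        ν i = ((Finset.Icc 1 k).filter (fun j => i ≤ ν j)).card) ∧
      -- β is the horizontal (N - 2k)-expansion of ν
      (∀ i : ℕ, 1 ≤ i → i ≤ k →
        β i = if i ≤ ((Finset.Icc 1 k).filter (fun j => j ≤ ν j)).card
          then ν i + (N - 2 * k) else ν i)) := by
  have hkn : k < n := by omega
  -- the value of μ at index k+1-p, for 1 ≤ p ≤ k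
  have hμval : ∀ p : ℕ, 1 ≤ p → p ≤ k → μ (k + 1 - p) = (n : ℤ) - k + p - β p := by
    intro p h1 h2
    have h := hμ1 (k + 1 - p) (by omega) (by omega)
    have hidx : k + 1 - (k + 1 - p) = p := by omega
    rw [hidx] at h
    rw [h]
    have : ((k + 1 - p : ℕ) : ℤ) = (k : ℤ) + 1 - p := by omega
    rw [this]
    ring
  constructor
  · -- forward direction (hard): regularity ⇒ existence of symmetric ν
    rintro ⟨H1, H2⟩
    -- every |μ (k+1-p)| lies in [n-k+1, n]
    have hβub : ∀ p : ℕ, 1 ≤ p → p ≤ k → β p ≤ N - k := by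
      intro p h1 h2
      exact (hβmono 1 p (le_refl 1) h1 h2).trans hβ1
    have hrange : ∀ p : ℕ, 1 ≤ p → p ≤ k →
        (n : ℤ) - k + 1 ≤ |μ (k + 1 - p)| ∧ |μ (k + 1 - p)| ≤ n := by
      intro p h1 h2
      have hv := hμval p h1 h2
      have hub := hβub p h1 h2
      have habs_le : |μ (k + 1 - p)| ≤ n := by
        rw [abs_le]
        constructor <;> [skip; skip] <;> rw [hv] <;> omega
      refine ⟨?_, habs_le⟩
      by_contra hcon
      push_neg at hcon
      have hne0 := H1 (k + 1 - p) (by omega) (by omega)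
      have hge1 : 1 ≤ |μ (k + 1 - p)| := by
        rcases lt_trichotomy (μ (k + 1 - p)) 0 with h | h | h
        · rw [abs_of_neg h]; omega
        · exact absurd h hne0
        · rw [abs_of_pos h]; omega
      set t := (|μ (k + 1 - p)|).toNat with ht
      have hta : (t : ℤ) = |μ (k + 1 - p)| := Int.toNat_of_nonneg (abs_nonneg _)
      have ht1 : 1 ≤ t := by omega
      have htnk : t ≤ n - k := by omega
      have hd := H2 (k + 1 - p) (n + 1 - t) (by omega) (by omega) (by omega)
      rw [hμ2 (n + 1 - t) (by omega) (by omega)] at hd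
      have hcast : ((n + 1 - t : ℕ) : ℤ) = (n : ℤ) + 1 - t := by omega
      rw [hcast] at hd
      rw [abs_of_nonneg (show (0:ℤ) ≤ (n:ℤ) + 1 - ((n:ℤ) + 1 - t) by omega)] at hd
      omega
    -- c is (weakly) monotone in the sense that μ (k+1-p) ≤ μ (k+1-q) when p ≤ q
    have hcle : ∀ p q : ℕ, 1 ≤ p → p ≤ q → q ≤ k → μ (k + 1 - p) ≤ μ (k + 1 - q) := by
      intro p q h1 h2 h3
      rw [hμval p h1 (h2.trans h3), hμval q (by omega) h3]
      have := hβmono p q h1 h2 h3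
      omega
    -- s := number of negative entries
    set s := ((Finset.Icc 1 k).filter (fun j => μ (k + 1 - j) < 0)).card with hsdef
    have hsk : s ≤ k := by
      have := Finset.card_filter_le (Finset.Icc 1 k) (fun j => μ (k + 1 - j) < 0)
      rw [Nat.card_Icc] at this
      omega
    have hsiff : ∀ p : ℕ, 1 ≤ p → p ≤ k → (p ≤ s ↔ μ (k + 1 - p) < 0) := by
      intro p h1 h2
      have h := count_initial (a := 1) (k := k) (le_refl 1) (fun j => μ (k + 1 - j) < 0)
        (by intro i j hi hij hjk hPj; have := hcle i j hi hij hjk; omega) h1 h2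
      have hp : p - 1 + 1 = p := by omega
      rw [hp] at h
      exact h
    -- bounds for β in the two regimes
    have hβbig : ∀ p : ℕ, 1 ≤ p → p ≤ s → (N - 2 * k) + p ≤ β p := by
      intro p h1 h2
      have hneg := (hsiff p h1 (h2.trans hsk)).1 h2
      have hr := (hrange p h1 (h2.trans hsk)).1
      rw [abs_of_neg hneg] at hr
      rw [hμval p h1 (h2.trans hsk)] at hneg hr
      omega
    have hβsmall : ∀ p : ℕ, s < p → p ≤ k → β p + 1 ≤ p := by
      intro p h1 h2
      have hnn : ¬ (μ (k + 1 - p) < 0) := by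
        intro hcon
        exact absurd ((hsiff p (by omega) h2).2 hcon) (by omega)
      push_neg at hnn
      have hr := (hrange p (by omega) h2).1
      rw [abs_of_nonneg hnn] at hr
      rw [hμval p (by omega) h2] at hr
      omega
    have hβs : ∀ p : ℕ, s < p → p ≤ k → β p ≤ s := by
      intro p h1 h2
      have := hβmono (s + 1) p (by omega) (by omega) h2
      have := hβsmall (s + 1) (by omega) (by omega)
      omega
    -- the candidate diagram
    set ν : ℕ → ℕ := fun i => if 1 ≤ i ∧ i ≤ k then (if i ≤ s then β i - (N - 2 * k) else β i) else 0
      with hνdef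
    have hνle : ∀ i : ℕ, 1 ≤ i → i ≤ s → ν i = β i - (N - 2 * k) := by
      intro i h1 h2
      simp only [hνdef]
      rw [if_pos ⟨h1, by omega⟩, if_pos h2]
    have hνgt : ∀ i : ℕ, 1 ≤ i → s < i → i ≤ k → ν i = β i := by
      intro i h1 h2 h3
      simp only [hνdef]
      rw [if_pos ⟨h1, h3⟩, if_neg (by omega)]
    have hν0 : ∀ i : ℕ, k < i → ν i = 0 := by
      intro i h
      simp only [hνdef]
      rw [if_neg (by omega)]
    have hνge : ∀ i : ℕ, 1 ≤ i → i ≤ s → i ≤ ν i ∧ ν i + (N - 2 * k) = β i := by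
      intro i h1 h2
      have := hβbig i h1 h2
      rw [hνle i h1 h2]
      omega
    have hν_s : ∀ i : ℕ, s < i → i ≤ k → ν i ≤ s := by
      intro i h1 h2
      rw [hνgt i (by omega) h1 h2]
      exact hβs i h1 h2
    have hνk : ∀ i : ℕ, ν i ≤ k := by
      intro i
      rcases Nat.lt_or_ge k i with h | h
      · rw [hν0 i h]; omega
      · rcases Nat.lt_or_ge 0 i with h0 | h0
        · rcases le_or_gt i s with hi | hi
          · rw [hνle i h0 hi]
            have := hβub i h0 h
            omega
          · have := hν_s i hi h
            omega
        · simp only [hνdef]; rw [if_neg (by omega)]; omega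
    have hνmono : ∀ i j : ℕ, 1 ≤ i → i ≤ j → ν j ≤ ν i := by
      intro i j h1 h2
      rcases Nat.lt_or_ge k j with hj | hj
      · rw [hν0 j hj]; omega
      · rcases le_or_gt j s with hjs | hjs
        · rw [hνle j (by omega) hjs, hνle i h1 (by omega)]
          have := hβmono i j h1 h2 (by omega)
          omega
        · rcases le_or_gt i s with his | his
          · have hl := hν_s j hjs hj
            have h3 := hβmono i s h1 his (by omega)
            have h4 := hβbig s (by omega) (le_refl s)
            rw [hνle i h1 his]
            omega
          · rw [hνgt j (by omega) hjs hj, hνgt i h1 his (by omega)]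
            exact hβmono i j h1 h2 hj
    -- the Durfee square of ν has size s
    have hdur_eq : ((Finset.Icc 1 k).filter (fun j => j ≤ ν j)).card = s := by
      have hcongr : (Finset.Icc 1 k).filter (fun j => j ≤ ν j)
          = (Finset.Icc 1 k).filter (fun j => j ≤ s) := by
        apply Finset.filter_congr
        intro j hj
        rw [Finset.mem_Icc] at hj
        constructor
        · intro hje
          by_contra hc
          push_neg at hc
          have := hν_s j hc hj.2
          omega
        · intro hjs
          have := (hνge j hj.1 hjs).1
          omega
      rw [hcongr]
      have : (Finset.Icc 1 k).filter (fun j => j ≤ s) = Finset.Icc 1 s := by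
        ext j
        simp only [Finset.mem_filter, Finset.mem_Icc]
        omega
      rw [this, Nat.card_Icc]
      omega
    -- the transpose function
    set T : ℕ → ℕ := fun i => ((Finset.Icc 1 k).filter (fun j => i ≤ ν j)).card with hTdef
    have hTiff : ∀ p t : ℕ, 1 ≤ p → p ≤ k → (p ≤ T t ↔ t ≤ ν p) := by
      intro p t h1 h2
      have h := count_initial (a := 1) (k := k) (le_refl 1) (fun j => t ≤ ν j)
        (by intro i j hi hij hjk hPj; have := hνmono i j hi hij; omega) h1 h2
      have hp : p - 1 + 1 = p := by omega
      rw [hp] at h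
      exact h
    have hTmono : ∀ t u : ℕ, t ≤ u → T u ≤ T t := by
      intro t u h
      apply Finset.card_le_card
      intro x hx
      rw [Finset.mem_filter] at hx ⊢
      exact ⟨hx.1, h.trans hx.2⟩
    have hTs : ∀ q : ℕ, s < q → T q ≤ s := by
      intro q hq
      have hsub : (Finset.Icc 1 k).filter (fun j => q ≤ ν j) ⊆ Finset.Icc 1 s := by
        intro j hj
        rw [Finset.mem_filter, Finset.mem_Icc] at hj
        rw [Finset.mem_Icc]
        refine ⟨hj.1.1, ?_⟩
        by_contra hc
        push_neg at hc
        have := hν_s j hc hj.1.2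
        omega
      have := Finset.card_le_card hsub
      rw [Nat.card_Icc] at this
      have h2 : T q = ((Finset.Icc 1 k).filter (fun j => q ≤ ν j)).card := rfl
      omega
    -- absolute values in terms of ν
    have haneg : ∀ p : ℕ, 1 ≤ p → p ≤ s →
        |μ (k + 1 - p)| = (n : ℤ) - k + ((ν p + 1 - p : ℕ) : ℤ) := by
      intro p h1 h2
      have hneg := (hsiff p h1 (h2.trans hsk)).1 h2
      rw [abs_of_neg hneg, hμval p h1 (h2.trans hsk)]
      have h3 := hνge p h1 h2
      have h4 : ((ν p + 1 - p : ℕ) : ℤ) = (ν p : ℤ) + 1 - p := by omega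
      rw [h4]
      omega
    have hapos : ∀ q : ℕ, s < q → q ≤ k →
        |μ (k + 1 - q)| = (n : ℤ) - k + ((q - ν q : ℕ) : ℤ) := by
      intro q h1 h2
      have hnn : ¬ (μ (k + 1 - q) < 0) := by
        intro hcon
        exact absurd ((hsiff q (by omega) h2).2 hcon) (by omega)
      push_neg at hnn
      rw [abs_of_nonneg hnn, hμval q (by omega) h2]
      have h3 := hνgt q (by omega) h1 h2
      have h4 := hβsmall q h1 h2
      have h5 : ((q - ν q : ℕ) : ℤ) = (q : ℤ) - ν q := by omega
      rw [h5]
      omega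
    -- the three image sets
    set A : Finset ℕ := (Finset.Icc 1 s).image (fun p => ν p + 1 - p) with hAdef
    set B : Finset ℕ := (Finset.Icc (s+1) k).image (fun q => q - T q) with hBdef
    set B' : Finset ℕ := (Finset.Icc (s+1) k).image (fun q => q - ν q) with hB'def
    have hAcard : A.card = s := by
      rw [hAdef, Finset.card_image_of_injOn, Nat.card_Icc]
      · omega
      · intro a ha b hb hab
        simp only [Finset.coe_Icc, Set.mem_Icc] at ha hb
        simp only at hab
        have h1 := (hνge a ha.1 ha.2).1
        have h2 := (hνge b hb.1 hb.2).1
        rcases le_or_gt a b with h | h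
        · have := hνmono a b ha.1 h
          omega
        · have := hνmono b a hb.1 h.le
          omega
    have hBcard : B.card = k - s := by
      rw [hBdef, Finset.card_image_of_injOn, Nat.card_Icc]
      · omega
      · intro a ha b hb hab
        simp only [Finset.coe_Icc, Set.mem_Icc] at ha hb
        simp only at hab
        have h1 := hTs a (by omega)
        have h2 := hTs b (by omega)
        rcases le_or_gt a b with h | h
        · have := hTmono a b h
          omega
        · have := hTmono b a h.le
          omega
    have hB'card : B'.card = k - s := by
      rw [hB'def, Finset.card_image_of_injOn, Nat.card_Icc]
      · omega
      · intro a ha b hb hab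
        simp only [Finset.coe_Icc, Set.mem_Icc] at ha hb
        simp only at hab
        have h1 := hν_s a (by omega) ha.2
        have h2 := hν_s b (by omega) hb.2
        rcases le_or_gt a b with h | h
        · have := hνmono a b (by omega) h
          omega
        · have := hνmono b a (by omega) h.le
          omega
    have hABsub : A ∪ B ⊆ Finset.Icc 1 k := by
      intro x hx
      rw [Finset.mem_union] at hx
      rw [Finset.mem_Icc]
      rcases hx with hx | hx
      · rw [hAdef, Finset.mem_image] at hx
        obtain ⟨p, hp, rfl⟩ := hx
        rw [Finset.mem_Icc] at hp
        have h1 := (hνge p hp.1 hp.2).1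
        have h2 := hνk p
        omega
      · rw [hBdef, Finset.mem_image] at hx
        obtain ⟨q, hq, rfl⟩ := hx
        rw [Finset.mem_Icc] at hq
        have h1 := hTs q (by omega)
        omega
    have hABdisj : Disjoint A B := by
      rw [Finset.disjoint_left]
      intro x hxA hxB
      rw [hAdef, Finset.mem_image] at hxA
      rw [hBdef, Finset.mem_image] at hxB
      obtain ⟨p, hp, hpx⟩ := hxA
      obtain ⟨q, hq, hqx⟩ := hxB
      rw [Finset.mem_Icc] at hp hq
      have h1 := (hνge p hp.1 hp.2).1
      have h2 := hTs q (by omega)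
      have h3 := hνk p
      have hiff := hTiff p q hp.1 (by omega)
      rcases le_or_gt q (ν p) with h | h
      · have := hiff.2 h
        omega
      · have : ¬ (p ≤ T q) := by
          intro hc
          exact absurd (hiff.1 hc) (by omega)
        omega
    have hAB'disj : Disjoint A B' := by
      rw [Finset.disjoint_left]
      intro x hxA hxB
      rw [hAdef, Finset.mem_image] at hxA
      rw [hB'def, Finset.mem_image] at hxB
      obtain ⟨p, hp, hpx⟩ := hxA
      obtain ⟨q, hq, hqx⟩ := hxB
      rw [Finset.mem_Icc] at hp hq
      have hd := H2 (k + 1 - q) (k + 1 - p) (by omega) (by omega) (by omega)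
      rw [haneg p hp.1 hp.2, hapos q (by omega) hq.2] at hd
      rw [hpx, hqx] at hd
      exact hd rfl
    have hicc : (Finset.Icc 1 k).card = k := by rw [Nat.card_Icc]; omega
    have hAB : A ∪ B = Finset.Icc 1 k := by
      apply Finset.eq_of_subset_of_card_le hABsub
      rw [Finset.card_union_of_disjoint hABdisj, hicc, hAcard, hBcard]
      omega
    have hAB'sub : A ∪ B' ⊆ Finset.Icc 1 k := by
      intro x hx
      rw [Finset.mem_union] at hx
      rw [Finset.mem_Icc]
      rcases hx with hx | hx
      · rw [hAdef, Finset.mem_image] at hx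
        obtain ⟨p, hp, rfl⟩ := hx
        rw [Finset.mem_Icc] at hp
        have h1 := (hνge p hp.1 hp.2).1
        have h2 := hνk p
        omega
      · rw [hB'def, Finset.mem_image] at hx
        obtain ⟨q, hq, rfl⟩ := hx
        rw [Finset.mem_Icc] at hq
        have h1 := hν_s q (by omega) hq.2
        omega
    have hAB' : A ∪ B' = Finset.Icc 1 k := by
      apply Finset.eq_of_subset_of_card_le hAB'sub
      rw [Finset.card_union_of_disjoint hAB'disj, hicc, hAcard, hB'card]
      omega
    have hBB' : B = B' := by
      have h1 : B = (A ∪ B) \ A := (Finset.union_sdiff_cancel_left hABdisj).symm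
      have h2 : B' = (A ∪ B') \ A := (Finset.union_sdiff_cancel_left hAB'disj).symm
      rw [h1, h2, hAB, hAB']
    -- pointwise: ν = T above the Durfee square
    have hνT : ∀ q : ℕ, s < q → q ≤ k → ν q = T q := by
      intro q h1 h2
      have hle1 : ν q ≤ T q := by
        apply images_eq_le T ν (fun a b ha hab hbk => hTmono a b hab)
          (fun a b ha hab hbk => hνmono a b (by omega) hab)
          (fun a ha hak => hTs a (by omega)) (fun a ha hak => hν_s a (by omega) hak)
          _ h1 h2
        rw [← hBdef, ← hB'def]
        exact hBB'
      have hle2 : T q ≤ ν q := by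
        apply images_eq_le ν T (fun a b ha hab hbk => hνmono a b (by omega) hab)
          (fun a b ha hab hbk => hTmono a b hab)
          (fun a ha hak => hν_s a (by omega) hak) (fun a ha hak => hTs a (by omega))
          _ h1 h2
        rw [← hBdef, ← hB'def]
        exact hBB'.symm
      omega
    -- the full symmetry equivalence
    have hiff_all : ∀ p q : ℕ, 1 ≤ p → p ≤ k → 1 ≤ q → q ≤ k → (p ≤ ν q ↔ q ≤ ν p) := by
      intro p q hp1 hpk hq1 hqk
      rcases le_or_gt p s with hps | hps <;> rcases le_or_gt q s with hqs | hqs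
      · have h1 := (hνge p hp1 hps).1
        have h2 := (hνge q hq1 hqs).1
        have h3 := hνmono p s hp1 hps
        have h4 := hνmono q s hq1 hqs
        have h5 := (hνge s (by omega) (le_refl s)).1
        constructor <;> intro <;> omega
      · rw [hνT q hqs hqk]
        exact hTiff p q hp1 hpk
      · rw [hνT p hps hpk]
        exact (hTiff q p hq1 hqk).symm
      · have h1 := hν_s p hps hpk
        have h2 := hν_s q hqs hqk
        constructor <;> intro <;> omega
    refine ⟨ν, hνmono, hνk, hν0, ?_, ?_⟩
    · -- symmetry
      intro i h1 h2
      have : ((Finset.Icc 1 k).filter (fun j => i ≤ ν j))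
          = (Finset.Icc 1 k).filter (fun j => j ≤ ν i) := by
        apply Finset.filter_congr
        intro j hj
        rw [Finset.mem_Icc] at hj
        exact hiff_all i j h1 h2 hj.1 hj.2
      rw [this]
      have h3 : (Finset.Icc 1 k).filter (fun j => j ≤ ν i) = Finset.Icc 1 (ν i) := by
        ext j
        simp only [Finset.mem_filter, Finset.mem_Icc]
        have := hνk i
        omega
      rw [h3, Nat.card_Icc]
      omega
    · -- expansion
      intro i h1 h2
      rw [hdur_eq]
      rcases le_or_gt i s with hi | hi
      · rw [if_pos hi]
        exact ((hνge i h1 hi).2).symm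
      · rw [if_neg (by omega)]
        exact (hνgt i h1 hi h2).symm
  · -- backward direction: ν ⇒ regularity
    rintro ⟨ν, hm, hνk, hν0, hsym, hexp⟩
    set s := ((Finset.Icc 1 k).filter (fun j => j ≤ ν j)).card with hs
    have hsk : s ≤ k := by
      have := Finset.card_filter_le (Finset.Icc 1 k) (fun j => j ≤ ν j)
      rw [Nat.card_Icc] at this
      omega
    have hdur : ∀ j : ℕ, 1 ≤ j → j ≤ k → (j ≤ s ↔ j ≤ ν j) := by
      intro j h1 h2
      have h := count_initial (a := 1) (k := k) (le_refl 1) (fun j => j ≤ ν j)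
        (by intro i j hi hij hjk hPj; have := hm i j hi hij; omega) h1 h2
      have hj : j - 1 + 1 = j := by omega
      rw [hj] at h
      exact h
    have hsymiff : ∀ p q : ℕ, 1 ≤ p → p ≤ k → 1 ≤ q → q ≤ k → (p ≤ ν q ↔ q ≤ ν p) := by
      intro p q hp1 hpk hq1 hqk
      rw [hsym q hq1 hqk]
      have h := count_initial (a := 1) (k := k) (le_refl 1) (fun j => q ≤ ν j)
        (by intro i j hi hij hjk hPj; have := hm i j hi hij; omega) hp1 hpk
      have hp : p - 1 + 1 = p := by omega
      rw [hp] at h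
      exact h
    -- values of μ in the two ranges
    have hneg : ∀ p : ℕ, 1 ≤ p → p ≤ s → μ (k + 1 - p) = -((n : ℤ) + 1 - k - p + ν p) := by
      intro p h1 h2
      rw [hμval p h1 (h2.trans hsk)]
      have hb := hexp p h1 (h2.trans hsk)
      rw [if_pos h2] at hb
      have : (β p : ℤ) = (ν p : ℤ) + ((N : ℤ) - 2 * k) := by omega
      rw [this]
      omega
    have hpos : ∀ p : ℕ, s < p → p ≤ k → μ (k + 1 - p) = (n : ℤ) - k + p - ν p := by
      intro p h1 h2
      rw [hμval p (by omega) h2]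
      have hb := hexp p (by omega) h2
      rw [if_neg (by omega)] at hb
      rw [hb]
    -- bounds on ν along/off the diagonal
    have hνge : ∀ p : ℕ, 1 ≤ p → p ≤ s → p ≤ ν p := by
      intro p h1 h2
      exact (hdur p h1 (h2.trans hsk)).1 h2
    have hνlt : ∀ p : ℕ, s < p → p ≤ k → ν p < p := by
      intro p h1 h2
      have := hdur p (by omega) h2
      omega
    constructor
    · -- nonvanishing
      intro i hi1 hin
      rcases le_or_gt i k with hik | hik
      · obtain ⟨p, hp1, hpk, rfl⟩ : ∃ p, 1 ≤ p ∧ p ≤ k ∧ i = k + 1 - p :=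
          ⟨k + 1 - i, by omega, by omega, by omega⟩
        rcases le_or_gt p s with hps | hps
        · rw [hneg p hp1 hps]
          have h1 := hνge p hp1 hps
          intro hc
          omega
        · rw [hpos p hps hpk]
          have h1 := hνlt p hps hpk
          intro hc
          omega
      · rw [hμ2 i (by omega) hin]
        intro hc
        omega
    · -- pairwise distinct absolute values
      intro i j hi1 hij hjn
      rcases le_or_gt j k with hjk | hjk
      · -- both indices at most k
        obtain ⟨p, hp1, hpk, rfl⟩ : ∃ p, 1 ≤ p ∧ p ≤ k ∧ i = k + 1 - p :=
          ⟨k + 1 - i, by omega, by omega, by omega⟩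
        obtain ⟨q, hq1, hqk, rfl⟩ : ∃ q, 1 ≤ q ∧ q ≤ k ∧ j = k + 1 - q :=
          ⟨k + 1 - j, by omega, by omega, by omega⟩
        have hqp : q < p := by omega
        rcases le_or_gt p s with hps | hps <;> rcases le_or_gt q s with hqs | hqs
        · -- both on the negative side
          rw [hneg p hp1 hps, hneg q hq1 hqs]
          have h1 := hνge p hp1 hps
          have h2 := hνge q hq1 hqs
          have h3 := hm q p hq1 hqp.le
          rw [abs_of_nonpos (by omega), abs_of_nonpos (by omega)]
          omega
        · -- q > s would contradict q < p ≤ s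
          omega
        · -- mixed case: q ≤ s < p
          rw [hpos p hps hpk, hneg q hq1 hqs]
          have h1 := hνlt p hps hpk
          have h2 := hνge q hq1 hqs
          rw [abs_of_nonneg (by omega), abs_of_nonpos (by omega)]
          intro hc
          rcases le_or_gt q (ν p) with h | h
          · have h4 := (hsymiff q p hq1 hqk hp1 hpk).1 h
            omega
          · have h4 : ¬ (p ≤ ν q) := by
              intro hcon
              exact absurd ((hsymiff p q hp1 hpk hq1 hqk).1 hcon) (by omega)
            omega
        · -- both on the positive side
          rw [hpos p hps hpk, hpos q hqs hqk]
          have h1 := hνlt p hps hpk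
          have h2 := hνlt q hqs hqk
          have h3 := hm q p hq1 hqp.le
          rw [abs_of_nonneg (by omega), abs_of_nonneg (by omega)]
          omega
      · rcases le_or_gt i k with hik | hik
        · -- i ≤ k < j
          rw [hμ2 j (by omega) hjn]
          obtain ⟨p, hp1, hpk, rfl⟩ : ∃ p, 1 ≤ p ∧ p ≤ k ∧ i = k + 1 - p :=
            ⟨k + 1 - i, by omega, by omega, by omega⟩
          rw [abs_of_nonneg (show (0:ℤ) ≤ (n:ℤ) + 1 - j by omega)]
          rcases le_or_gt p s with hps | hps
          · rw [hneg p hp1 hps]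
            have h1 := hνge p hp1 hps
            rw [abs_of_nonpos (by omega)]
            omega
          · rw [hpos p hps hpk]
            have h1 := hνlt p hps hpk
            rw [abs_of_nonneg (by omega)]
            omega
        · -- k < i < j
          rw [hμ2 i (by omega) (by omega), hμ2 j (by omega) hjn]
          rw [abs_of_nonneg (by omega), abs_of_nonneg (by omega)]
          omega
end

section
/- (Regularity analysis for the even orthogonal Borel–Bott–Weil weight.) Let n ≥ 1 and k ≥ 1 be integers with N = 2n ≥ 2k+2. Let β₁ ≥ β₂ ≥ ⋯ ≥ β_k ≥ 0 be integers with β₁ ≤ N−k, and define m ∈ ℤⁿ by mᵢ = 2(n−i)+1 − 2β_{k+1−i} for 1 ≤ i ≤ k and mᵢ = 2(n−i)+1 for k+1 ≤ i ≤ n (these are twice the half-integer coordinates of the weight δ + ρ). Then the absolute values |m₁|, …, |mₙ| are pairwise distinct if and only if there exists a symmetric Young diagram ν contained in the k×k square such that β is the horizontal (N−2k)-expansion of ν, i.e. βᵢ = νᵢ + (N−2k) for 1 ≤ i ≤ ℓ(ν) and βᵢ = νᵢ for ℓ(ν) < i ≤ k. -/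
/-!
Put `p = N - 2k` and `q = k + 1 - i`. The entries `m_i` with `i > k` are the odd numbers
`1, 3, …, p - 1`, and `|m_{k+1-q}| ≥ p + 1` exactly when `β_q < q` or `β_q ≥ q + p`. These gaps
say that `β` is the horizontal `p`-expansion of a diagram `ν` in the `k × k` square, and then
`|m_{k+1-q}| = 2 F(q) + p + 1` with `F(q) = ν_q - q` on the Durfee square and `q - 1 - ν_q`
below it. Replacing `ν_q` by `νᵀ_q` below the Durfee square gives coordinates that enumerate
`{0, …, k-1}`, since no hook length vanishes. Hence `F` is injective iff `ν` and `νᵀ` agree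
below the Durfee square, and the Galois connection `j ≤ νᵀ_i ↔ i ≤ ν_j` propagates this
agreement to all of `ν = νᵀ`.
-/

section StrictMonoOn

variable {α β : Type*} [LinearOrder α] [LinearOrder β] {s : Set α} {f g : α → β}

lemma StrictMonoOn.le_of_image_subset (hf : StrictMonoOn f s) (hg : StrictMonoOn g s)
    (h : f '' s ⊆ g '' s) {x : α} (hx : x ∈ s) (hagree : ∀ y ∈ s, y < x → f y = g y) :
    g x ≤ f x := by
  obtain ⟨y, hy, hyx⟩ := h ⟨x, hx, rfl⟩
  rcases lt_or_ge y x with hlt | hle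
  · exact absurd (hagree y hy hlt ▸ hyx) (hf hy hx hlt).ne
  · exact hyx ▸ hg.monotoneOn hx hy hle

lemma StrictMonoOn.eqOn_of_image_eq [WellFoundedLT α] (hf : StrictMonoOn f s)
    (hg : StrictMonoOn g s) (h : f '' s = g '' s) : Set.EqOn f g s := by
  intro x
  induction x using WellFoundedLT.induction with
  | _ x ih =>
    intro hx
    have hagree : ∀ y ∈ s, y < x → f y = g y := fun y hy hyx => ih y hyx hy
    exact le_antisymm (hg.le_of_image_subset hf h.ge hx fun y hy hyx => (hagree y hy hyx).symm)
      (hf.le_of_image_subset hg h.le hx hagree)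

end StrictMonoOn

namespace Nat

lemma card_filter_Icc_le (k : ℕ) (P : ℕ → Prop) [DecidablePred P] :
    ((Finset.Icc 1 k).filter P).card ≤ k :=
  (Finset.card_filter_le _ _).trans (by simp)

lemma le_card_filter_Icc_iff {k j : ℕ} {P : ℕ → Prop} [DecidablePred P]
    (hP : ∀ i j, 1 ≤ i → i ≤ j → j ≤ k → P j → P i) (hj : 1 ≤ j) (hjk : j ≤ k) :
    j ≤ ((Finset.Icc 1 k).filter P).card ↔ P j := by
  constructor
  · intro hle
    by_contra hPj
    have hsub : (Finset.Icc 1 k).filter P ⊆ Finset.Icc 1 (j - 1) := by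
      intro i hi
      simp only [Finset.mem_filter, Finset.mem_Icc] at hi ⊢
      refine ⟨hi.1.1, Nat.le_sub_one_of_lt (lt_of_not_ge fun hji => ?_)⟩
      exact hPj (hP j i hj hji hi.1.2 hi.2)
    have := Finset.card_le_card hsub
    simp only [Nat.card_Icc] at this
    omega
  · intro hPj
    calc j = (Finset.Icc 1 j).card := by simp
      _ ≤ _ := Finset.card_le_card fun i hi => by
        simp only [Finset.mem_filter, Finset.mem_Icc] at hi ⊢
        exact ⟨⟨hi.1, hi.2.trans hjk⟩, hP i j hi.1 hi.2 hjk hPj⟩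

lemma eq_of_forall_le_iff_of_le {a b k : ℕ} (ha : a ≤ k) (hb : b ≤ k)
    (h : ∀ j, 1 ≤ j → j ≤ k → (j ≤ a ↔ j ≤ b)) : a = b :=
  eq_of_forall_le_iff fun j => by
    rcases Nat.eq_zero_or_pos j with rfl | hj
    · simp
    · rcases le_or_gt j k with hjk | hjk
      · exact h j hj hjk
      · omega

lemma image_Icc_eq_Iio_of_injOn {k : ℕ} {f : ℕ → ℕ} (hlt : ∀ q, 1 ≤ q → q ≤ k → f q < k)
    (hf : Set.InjOn f (Set.Icc 1 k)) : f '' Set.Icc 1 k = Set.Iio k := by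
  have hsub : (Finset.Icc 1 k).image f ⊆ Finset.range k := fun x hx => by
    obtain ⟨q, hq, rfl⟩ := Finset.mem_image.1 hx
    rw [Finset.mem_Icc] at hq
    exact Finset.mem_range.2 (hlt q hq.1 hq.2)
  have heq := Finset.eq_of_subset_of_card_le hsub (by
    rw [Finset.card_image_of_injOn (by rwa [Finset.coe_Icc])]
    simp)
  simpa using congrArg (fun t : Finset ℕ => (t : Set ℕ)) heq

end Nat

namespace BoxDiagram

structure IsBoxed (k : ℕ) (ν : ℕ → ℕ) : Prop where
  antitone : ∀ i j, 1 ≤ i → i ≤ j → ν j ≤ ν i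
  le : ∀ i, ν i ≤ k
  eq_zero : ∀ i, k < i → ν i = 0

def transpose (k : ℕ) (ν : ℕ → ℕ) (i : ℕ) : ℕ :=
  ((Finset.Icc 1 k).filter (fun j => i ≤ ν j)).card

def durfee (k : ℕ) (ν : ℕ → ℕ) : ℕ :=
  ((Finset.Icc 1 k).filter (fun j => j ≤ ν j)).card

/-- For `μ = transpose k ν` these are the Frobenius coordinates of `ν`, shifted so that they
enumerate `{0, …, k - 1}`. -/
def frobeniusCoord (k : ℕ) (ν μ : ℕ → ℕ) (q : ℕ) : ℕ :=
  if q ≤ durfee k ν then ν q - q else q - 1 - μ q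

def horizontalExpansion (p k : ℕ) (ν : ℕ → ℕ) (i : ℕ) : ℕ :=
  if i ≤ durfee k ν then ν i + p else ν i

lemma transpose_le (k : ℕ) (ν : ℕ → ℕ) (i : ℕ) : transpose k ν i ≤ k :=
  Nat.card_filter_Icc_le k _

lemma antitone_transpose (k : ℕ) (ν : ℕ → ℕ) : Antitone (transpose k ν) := fun _ _ h =>
  Finset.card_le_card (Finset.monotone_filter_right _ fun _ _ hj => h.trans hj)

lemma durfee_le (k : ℕ) (ν : ℕ → ℕ) : durfee k ν ≤ k :=
  Nat.card_filter_Icc_le k _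

namespace IsBoxed

variable {k : ℕ} {ν : ℕ → ℕ}

lemma antitoneOn (hν : IsBoxed k ν) : AntitoneOn ν (Set.Ici 1) :=
  fun i hi _ _ hij => hν.antitone i _ hi hij

lemma le_transpose_iff (hν : IsBoxed k ν) {i j : ℕ} (hi : 1 ≤ i) (hj : 1 ≤ j) :
    j ≤ transpose k ν i ↔ i ≤ ν j := by
  rcases le_or_gt j k with hjk | hjk
  · exact Nat.le_card_filter_Icc_iff
      (fun a b ha hab _ hb => hb.trans (hν.antitone a b ha hab)) hj hjk
  · have := transpose_le k ν i
    have := hν.eq_zero j hjk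
    constructor <;> intro <;> omega

/-- `ν i + νᵀ j - i - j + 1` is the hook length of the cell `(i, j)` when it lies in `ν`, and is
`≤ 0` otherwise. -/
lemma add_transpose_ne (hν : IsBoxed k ν) {i j : ℕ} (hi : 1 ≤ i) (hj : 1 ≤ j) :
    ν i + transpose k ν j ≠ i + j - 1 := by
  have := hν.le_transpose_iff hj hi
  by_cases hji : j ≤ ν i
  · have := this.2 hji
    omega
  · have : ¬ i ≤ transpose k ν j := fun h => hji (this.1 h)
    omega

lemma le_durfee_iff (hν : IsBoxed k ν) {j : ℕ} (hj : 1 ≤ j) (hjk : j ≤ k) :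
    j ≤ durfee k ν ↔ j ≤ ν j :=
  Nat.le_card_filter_Icc_iff
    (fun a b ha hab _ hb => hab.trans (hb.trans (hν.antitone a b ha hab))) hj hjk

lemma le_of_le_durfee (hν : IsBoxed k ν) {i j : ℕ} (hi : 1 ≤ i) (hj : 1 ≤ j)
    (his : i ≤ durfee k ν) (hjs : j ≤ durfee k ν) : i ≤ ν j := by
  rcases le_total i j with hij | hji
  · exact hij.trans ((hν.le_durfee_iff hj (hjs.trans (durfee_le k ν))).1 hjs)
  · exact ((hν.le_durfee_iff hi (his.trans (durfee_le k ν))).1 his).trans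
      (hν.antitone j i hj hji)

lemma lt_of_durfee_lt (hν : IsBoxed k ν) {j : ℕ} (hsj : durfee k ν < j) : ν j < j := by
  rcases le_or_gt j k with hjk | hjk
  · exact lt_of_not_ge fun h => by
      have := (hν.le_durfee_iff (by omega) hjk).2 h
      omega
  · have := hν.eq_zero j hjk
    omega

lemma transpose_lt_of_durfee_lt (hν : IsBoxed k ν) {j : ℕ} (hsj : durfee k ν < j) :
    transpose k ν j < j :=
  lt_of_not_ge fun h => (hν.lt_of_durfee_lt hsj).not_ge ((hν.le_transpose_iff (by omega)
    (by omega)).1 h)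

lemma transpose_eq_of_durfee_lt (hν : IsBoxed k ν)
    (hsym : ∀ j, durfee k ν < j → j ≤ k → transpose k ν j = ν j) {i : ℕ} (hi : 1 ≤ i)
    (hik : i ≤ k) : transpose k ν i = ν i := by
  rcases lt_or_ge (durfee k ν) i with hsi | his
  · exact hsym i hsi hik
  refine Nat.eq_of_forall_le_iff_of_le (transpose_le k ν i) (hν.le i) fun j hj hjk => ?_
  rw [hν.le_transpose_iff hi hj]
  rcases lt_or_ge (durfee k ν) j with hsj | hjs
  · rw [← hsym j hsj hjk, hν.le_transpose_iff hj hi]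
  · exact iff_of_true (hν.le_of_le_durfee hi hj his hjs) (hν.le_of_le_durfee hj hi hjs his)

lemma frobeniusCoord_lt (hν : IsBoxed k ν) (μ : ℕ → ℕ) {q : ℕ} (hq : 1 ≤ q) (hqk : q ≤ k) :
    frobeniusCoord k ν μ q < k := by
  have := hν.le q
  unfold frobeniusCoord
  split_ifs <;> omega

lemma strictAntiOn_frobeniusCoord (hν : IsBoxed k ν) (μ : ℕ → ℕ) :
    StrictAntiOn (frobeniusCoord k ν μ) (Set.Icc 1 (durfee k ν)) := by
  intro i hi j hj hij
  have := hν.antitone i j hi.1 hij.le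
  have := hν.le_of_le_durfee hj.1 hj.1 hj.2 hj.2
  simp only [frobeniusCoord, if_pos hi.2, if_pos hj.2]
  omega

lemma strictMonoOn_frobeniusCoord {μ : ℕ → ℕ} (hμ : AntitoneOn μ (Set.Ici 1))
    (hlt : ∀ j, durfee k ν < j → μ j < j) :
    StrictMonoOn (frobeniusCoord k ν μ) (Set.Icc (durfee k ν + 1) k) := by
  intro i ⟨hsi, _⟩ j ⟨hsj, _⟩ hij
  have := hμ (show 1 ≤ i by omega) (show 1 ≤ j by omega) hij.le
  have := hlt i hsi
  have := hlt j hsj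
  simp only [frobeniusCoord, if_neg (show ¬ i ≤ durfee k ν by omega),
    if_neg (show ¬ j ≤ durfee k ν by omega)]
  omega

lemma injOn_frobeniusCoord_transpose (hν : IsBoxed k ν) :
    Set.InjOn (frobeniusCoord k ν (transpose k ν)) (Set.Icc 1 k) := by
  intro a ha b hb hab
  by_contra hne
  wlog hlt : a < b generalizing a b
  · exact this hb ha hab.symm (Ne.symm hne) (by omega)
  have hmono := strictMonoOn_frobeniusCoord ((antitone_transpose k ν).antitoneOn _)
    fun _ => hν.transpose_lt_of_durfee_lt
  rcases le_or_gt b (durfee k ν) with hbs | hsb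
  · exact (hν.strictAntiOn_frobeniusCoord _ ⟨ha.1, hlt.le.trans hbs⟩ ⟨hb.1, hbs⟩ hlt).ne' hab
  rcases le_or_gt a (durfee k ν) with has | hsa
  · have := hν.add_transpose_ne ha.1 hb.1
    have := hν.le_of_le_durfee ha.1 ha.1 has has
    have := hν.transpose_lt_of_durfee_lt hsb
    simp only [frobeniusCoord, if_pos has, if_neg (not_le.2 hsb)] at hab
    omega
  · exact (hmono ⟨hsa, ha.2⟩ ⟨hsb, hb.2⟩ hlt).ne hab

lemma image_frobeniusCoord_Icc_durfee_lt (hν : IsBoxed k ν) {μ : ℕ → ℕ}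
    (hinj : Set.InjOn (frobeniusCoord k ν μ) (Set.Icc 1 k)) :
    frobeniusCoord k ν μ '' Set.Icc (durfee k ν + 1) k =
      Set.Iio k \ (fun i => ν i - i) '' Set.Icc 1 (durfee k ν) := by
  have hsplit : Set.Icc (durfee k ν + 1) k = Set.Icc 1 k \ Set.Icc 1 (durfee k ν) := by
    ext q
    simp only [Set.mem_Icc, Set.mem_sdiff]
    omega
  rw [hsplit, hinj.image_sdiff_subset (Set.Icc_subset_Icc_right (durfee_le k ν)),
    Nat.image_Icc_eq_Iio_of_injOn (fun _ => hν.frobeniusCoord_lt μ) hinj]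
  congr 1
  exact Set.image_congr fun i hi => if_pos hi.2

theorem injOn_frobeniusCoord_iff (hν : IsBoxed k ν) :
    Set.InjOn (frobeniusCoord k ν ν) (Set.Icc 1 k) ↔
      ∀ i, 1 ≤ i → i ≤ k → ν i = transpose k ν i := by
  constructor
  · intro hinj
    have hmono := strictMonoOn_frobeniusCoord hν.antitoneOn fun _ => hν.lt_of_durfee_lt
    have hmonoT := strictMonoOn_frobeniusCoord (k := k) (ν := ν)
      ((antitone_transpose k ν).antitoneOn _) fun _ => hν.transpose_lt_of_durfee_lt
    have heq := hmono.eqOn_of_image_eq hmonoT ((hν.image_frobeniusCoord_Icc_durfee_lt hinj).trans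
      (hν.image_frobeniusCoord_Icc_durfee_lt hν.injOn_frobeniusCoord_transpose).symm)
    have hsym : ∀ j, durfee k ν < j → j ≤ k → transpose k ν j = ν j := fun j hsj hjk => by
      have h := heq ⟨hsj, hjk⟩
      simp only [frobeniusCoord, if_neg (not_le.2 hsj)] at h
      have := hν.lt_of_durfee_lt hsj
      have := hν.transpose_lt_of_durfee_lt hsj
      omega
    exact fun i hi hik => (hν.transpose_eq_of_durfee_lt hsym hi hik).symm
  · intro hsym
    refine hν.injOn_frobeniusCoord_transpose.congr fun q hq => ?_
    simp only [frobeniusCoord, hsym q hq.1 hq.2]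

end IsBoxed

def horizontalContraction (p k : ℕ) (β : ℕ → ℕ) (q : ℕ) : ℕ :=
  if 1 ≤ q ∧ q ≤ k then (if q + p ≤ β q then β q - p else β q) else 0

section Contraction

variable {p k : ℕ} {β : ℕ → ℕ}

lemma isBoxed_horizontalContraction (hβ : ∀ i j, 1 ≤ i → i ≤ j → j ≤ k → β j ≤ β i)
    (hβ1 : β 1 ≤ k + p) (hgap : ∀ q, 1 ≤ q → q ≤ k → β q < q ∨ q + p ≤ β q) :
    IsBoxed k (horizontalContraction p k β) where
  antitone i j hi hij := by
    unfold horizontalContraction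
    by_cases hjk : j ≤ k
    swap
    · simp only [hjk, and_false, if_false, zero_le]
    have hβij := hβ i j hi hij hjk
    -- a large row `i` above a small row `j`: `r = β j` would otherwise lie strictly
    -- between `i` and `j` and violate the gap
    have hcross : i + p ≤ β i → β j < j → β j + p ≤ β i := fun hbi hbj => by
      by_contra hlt
      have hr := hgap (β j) (by omega) (by omega)
      have := hβ (β j) j (by omega) (by omega) hjk
      have := hβ i (β j) hi (by omega) (by omega)
      omega
    have := hgap j (hi.trans hij) hjk
    rw [if_pos (show 1 ≤ j ∧ j ≤ k from ⟨hi.trans hij, hjk⟩),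
      if_pos (show 1 ≤ i ∧ i ≤ k from ⟨hi, hij.trans hjk⟩)]
    split_ifs <;> omega
  le i := by
    unfold horizontalContraction
    split_ifs with hi hb
    · have := hβ 1 i le_rfl hi.1 hi.2
      omega
    · rcases hgap i hi.1 hi.2 with h | h <;> omega
    · exact Nat.zero_le k
  eq_zero i hi := if_neg (by omega)

lemma horizontalExpansion_horizontalContraction
    (hβ : ∀ i j, 1 ≤ i → i ≤ j → j ≤ k → β j ≤ β i) (hβ1 : β 1 ≤ k + p)
    (hgap : ∀ q, 1 ≤ q → q ≤ k → β q < q ∨ q + p ≤ β q) {q : ℕ} (hq : 1 ≤ q) (hqk : q ≤ k) :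
    horizontalExpansion p k (horizontalContraction p k β) q = β q := by
  have hν := isBoxed_horizontalContraction hβ hβ1 hgap
  have hcon : horizontalContraction p k β q = if q + p ≤ β q then β q - p else β q :=
    if_pos ⟨hq, hqk⟩
  have := hgap q hq hqk
  unfold horizontalExpansion
  simp only [hν.le_durfee_iff hq hqk, hcon]
  split_ifs <;> omega

end Contraction

lemma IsBoxed.abs_weight_horizontalExpansion {k : ℕ} {ν : ℕ → ℕ} (hν : IsBoxed k ν) (p : ℕ)
    {q : ℕ} (hq : 1 ≤ q) :
    |(p : ℤ) + 2 * q - 1 - 2 * horizontalExpansion p k ν q| =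
      2 * frobeniusCoord k ν ν q + p + 1 := by
  rw [abs_eq (by positivity)]
  unfold horizontalExpansion frobeniusCoord
  split_ifs with hqs
  · have := hν.le_of_le_durfee hq hq hqs hqs
    omega
  · have := hν.lt_of_durfee_lt (not_le.1 hqs)
    omega

theorem gap_injOn_iff_exists_symmetric_expansion {p k : ℕ} {β : ℕ → ℕ}
    (hβ : ∀ i j, 1 ≤ i → i ≤ j → j ≤ k → β j ≤ β i) (hβ1 : β 1 ≤ k + p) :
    ((∀ q, 1 ≤ q → q ≤ k → (p : ℤ) + 1 ≤ |(p : ℤ) + 2 * q - 1 - 2 * β q|) ∧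
        Set.InjOn (fun q => |(p : ℤ) + 2 * q - 1 - 2 * β q|) (Set.Icc 1 k)) ↔
      ∃ ν, IsBoxed k ν ∧ (∀ i, 1 ≤ i → i ≤ k → ν i = transpose k ν i) ∧
        ∀ i, 1 ≤ i → i ≤ k → β i = horizontalExpansion p k ν i := by
  have hweight : ∀ ν, IsBoxed k ν → (∀ i, 1 ≤ i → i ≤ k → β i = horizontalExpansion p k ν i) →
      (((∀ q, 1 ≤ q → q ≤ k → (p : ℤ) + 1 ≤ |(p : ℤ) + 2 * q - 1 - 2 * β q|) ∧
        Set.InjOn (fun q => |(p : ℤ) + 2 * q - 1 - 2 * β q|) (Set.Icc 1 k)) ↔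
      Set.InjOn (frobeniusCoord k ν ν) (Set.Icc 1 k)) := by
    intro ν hν hexp
    have hw : ∀ q, 1 ≤ q → q ≤ k →
        |(p : ℤ) + 2 * q - 1 - 2 * β q| = 2 * frobeniusCoord k ν ν q + p + 1 :=
      fun q hq hqk => by rw [hexp q hq hqk, hν.abs_weight_horizontalExpansion p hq]
    rw [Set.EqOn.injOn_iff fun q hq => hw q hq.1 hq.2]
    refine ⟨fun h a ha b hb hab => h.2 ha hb (by simp only [hab]), fun h => ⟨?_, ?_⟩⟩
    · exact fun q hq hqk => by rw [hw q hq hqk]; omega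
    · exact fun a ha b hb hab => h ha hb (by simp only at hab; omega)
  constructor
  · intro hreg
    have hgap : ∀ q, 1 ≤ q → q ≤ k → β q < q ∨ q + p ≤ β q := fun q hq hqk => by
      have := le_abs'.1 (hreg.1 q hq hqk)
      omega
    have hν := isBoxed_horizontalContraction hβ hβ1 hgap
    have hexp : ∀ i, 1 ≤ i → i ≤ k →
        β i = horizontalExpansion p k (horizontalContraction p k β) i :=
      fun i hi hik => (horizontalExpansion_horizontalContraction hβ hβ1 hgap hi hik).symm
    exact ⟨_, hν, hν.injOn_frobeniusCoord_iff.1 ((hweight _ hν hexp).1 hreg), hexp⟩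
  · rintro ⟨ν, hν, hsym, hexp⟩
    exact (hweight ν hν hexp).2 (hν.injOn_frobeniusCoord_iff.2 hsym)

end BoxDiagram

lemma pairwise_abs_ne_iff_of_odd_tail {k n : ℕ} {m w : ℕ → ℤ} (hkn : k ≤ n)
    (hhead : ∀ i, 1 ≤ i → i ≤ k → |m i| = w (k + 1 - i)) (hodd : ∀ q, Odd (w q))
    (htail : ∀ i, k + 1 ≤ i → i ≤ n → m i = 2 * ((n : ℤ) - i) + 1) :
    (∀ i j, 1 ≤ i → i < j → j ≤ n → |m i| ≠ |m j|) ↔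
      (∀ q, 1 ≤ q → q ≤ k → 2 * ((n : ℤ) - k) + 1 ≤ w q) ∧ Set.InjOn w (Set.Icc 1 k) := by
  have habs_tail : ∀ i, k + 1 ≤ i → i ≤ n → |m i| = 2 * ((n : ℤ) - i) + 1 := fun i hi hin => by
    rw [htail i hi hin]
    exact abs_of_nonneg (by omega)
  have hhead' : ∀ q, 1 ≤ q → q ≤ k → |m (k + 1 - q)| = w q := fun q hq hqk => by
    rw [hhead _ (by omega) (by omega), Nat.sub_sub_self (by omega)]
  constructor
  · intro H
    refine ⟨fun q hq hqk => ?_, fun a ha b hb hab => ?_⟩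
    · by_contra hlt
      -- `w q` is then the odd value `|m j|` of some tail index `j`
      obtain ⟨t, ht⟩ := hodd q
      have hwq := hhead' q hq hqk
      have := abs_nonneg (m (k + 1 - q))
      have hj := habs_tail (n - t.toNat) (by omega) (by omega)
      exact H (k + 1 - q) (n - t.toNat) (by omega) (by omega) (by omega) (by omega)
    · obtain ⟨⟨ha₁, ha₂⟩, ⟨hb₁, hb₂⟩⟩ := And.intro ha hb
      by_contra hne
      rcases lt_or_gt_of_ne hne with hlt | hlt
      · exact H (k + 1 - b) (k + 1 - a) (by omega) (by omega) (by omega)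
          (by rw [hhead' a ha₁ ha₂, hhead' b hb₁ hb₂, hab])
      · exact H (k + 1 - a) (k + 1 - b) (by omega) (by omega) (by omega)
          (by rw [hhead' a ha₁ ha₂, hhead' b hb₁ hb₂, hab])
  · rintro ⟨hbound, hinj⟩ i j hi hij hjn heq
    rcases le_or_gt j k with hjk | hkj
    · rw [hhead i hi (by omega), hhead j (by omega) hjk] at heq
      have := hinj ⟨by omega, by omega⟩ ⟨by omega, by omega⟩ heq
      omega
    · rw [habs_tail j hkj hjn] at heq
      rcases le_or_gt i k with hik | hki
      · have := hbound (k + 1 - i) (by omega) (by omega)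
        rw [hhead i hi hik] at heq
        omega
      · rw [habs_tail i hki (by omega)] at heq
        omega

theorem bbw_regularity_even_orthogonal_general
    (n k N : ℕ) (hN : N = 2 * n) (hNk : 2 * k + 2 ≤ N)
    (β : ℕ → ℕ)
    (hβmono : ∀ i j : ℕ, 1 ≤ i → i ≤ j → j ≤ k → β j ≤ β i)
    (hβ1 : β 1 ≤ N - k)
    (m : ℕ → ℤ)
    (hm1 : ∀ i : ℕ, 1 ≤ i → i ≤ k →
      m i = 2 * ((n : ℤ) - i) + 1 - 2 * β (k + 1 - i))
    (hm2 : ∀ i : ℕ, k + 1 ≤ i → i ≤ n → m i = 2 * ((n : ℤ) - i) + 1) :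
    (∀ i j : ℕ, 1 ≤ i → i < j → j ≤ n → |m i| ≠ |m j|) ↔
    (∃ ν : ℕ → ℕ,
      -- ν is a Young diagram contained in the k × k square
      (∀ i j : ℕ, 1 ≤ i → i ≤ j → ν j ≤ ν i) ∧
      (∀ i : ℕ, ν i ≤ k) ∧
      (∀ i : ℕ, k < i → ν i = 0) ∧
      -- ν is symmetric: ν = νᵀ
      (∀ i : ℕ, 1 ≤ i → i ≤ k →
        ν i = ((Finset.Icc 1 k).filter (fun j => i ≤ ν j)).card) ∧
      -- β is the horizontal (N - 2k)-expansion of ν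
      (∀ i : ℕ, 1 ≤ i → i ≤ k →
        β i = if i ≤ ((Finset.Icc 1 k).filter (fun j => j ≤ ν j)).card
          then ν i + (N - 2 * k) else ν i)) := by
  obtain ⟨d, rfl⟩ : ∃ d, n = k + d := ⟨n - k, by omega⟩
  have hp : N - 2 * k = 2 * d := by omega
  have hcore := BoxDiagram.gap_injOn_iff_exists_symmetric_expansion (p := 2 * d) hβmono (by omega)
  push_cast at hcore
  rw [pairwise_abs_ne_iff_of_odd_tail (w := fun q => |2 * (d : ℤ) + 2 * q - 1 - 2 * β q|)
    (by omega) (fun i hi hik => by rw [hm1 i hi hik]; congr 1; omega)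
    (fun q => odd_abs.2 ⟨d + q - 1 - β q, by ring⟩) hm2]
  push_cast
  rw [show (k + d : ℤ) - k = d by ring, hcore, hp]
  exact ⟨fun ⟨ν, ⟨h₁, h₂, h₃⟩, h₄, h₅⟩ => ⟨ν, h₁, h₂, h₃, h₄, h₅⟩,
    fun ⟨ν, h₁, h₂, h₃, h₄, h₅⟩ => ⟨ν, ⟨h₁, h₂, h₃⟩, h₄, h₅⟩⟩

/-- Regularity analysis for the even orthogonal Borel–Bott–Weil weight (type `D_n`).
Let `N = 2n ≥ 2k+2`, let `β₁ ≥ ⋯ ≥ β_k ≥ 0` with `β₁ ≤ N-k`, and let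
`mᵢ = 2(n-i)+1 - 2β_{k+1-i}` for `1 ≤ i ≤ k`, `mᵢ = 2(n-i)+1` for `k+1 ≤ i ≤ n`
(twice the half-integer coordinates of `δ + ρ`).
Then the `|mᵢ|` are pairwise distinct if and only if there is a symmetric Young
diagram `ν` in the `k × k` square (with diagonal length `s = ℓ(ν)`) such that `β`
is the horizontal `(N-2k)`-expansion of `ν`, i.e. `βᵢ = νᵢ + (N-2k)` for `i ≤ s`
and `βᵢ = νᵢ` for `s < i ≤ k`. (Everything is 1-indexed.) -/
theorem bbw_regularity_even_orthogonal
    (n k N : ℕ) (hn : 1 ≤ n) (hk : 1 ≤ k) (hN : N = 2 * n) (hNk : 2 * k + 2 ≤ N)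
    (β : ℕ → ℕ)
    (hβmono : ∀ i j : ℕ, 1 ≤ i → i ≤ j → j ≤ k → β j ≤ β i)
    (hβ1 : β 1 ≤ N - k)
    (m : ℕ → ℤ)
    (hm1 : ∀ i : ℕ, 1 ≤ i → i ≤ k →
      m i = 2 * ((n : ℤ) - i) + 1 - 2 * β (k + 1 - i))
    (hm2 : ∀ i : ℕ, k + 1 ≤ i → i ≤ n → m i = 2 * ((n : ℤ) - i) + 1) :
    (∀ i j : ℕ, 1 ≤ i → i < j → j ≤ n → |m i| ≠ |m j|) ↔
    (∃ ν : ℕ → ℕ,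
      -- ν is a Young diagram contained in the k × k square
      (∀ i j : ℕ, 1 ≤ i → i ≤ j → ν j ≤ ν i) ∧
      (∀ i : ℕ, ν i ≤ k) ∧
      (∀ i : ℕ, k < i → ν i = 0) ∧
      -- ν is symmetric: ν = νᵀ
      (∀ i : ℕ, 1 ≤ i → i ≤ k →
        ν i = ((Finset.Icc 1 k).filter (fun j => i ≤ ν j)).card) ∧
      -- β is the horizontal (N - 2k)-expansion of ν
      (∀ i : ℕ, 1 ≤ i → i ≤ k →
        β i = if i ≤ ((Finset.Icc 1 k).filter (fun j => j ≤ ν j)).card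
          then ν i + (N - 2 * k) else ν i)) :=
  bbw_regularity_even_orthogonal_general n k N hN hNk β hβmono hβ1 m hm1 hm2
end

section
/- Let k ≥ 1 and N ≥ 2k+2 be integers. Let μ and ν be Young diagrams contained in the k×k square, and set r = ℓ(μ), s = ℓ(ν). Let μ̂ and ν̂ be the vertical (N−2k)-expansions of μ and ν, regarded as weakly decreasing sequences of length N−k: μ̂ = (μ₁, …, μ_r, r, …, r, μ_{r+1}, …, μ_k) with N−2k copies of r, and similarly for ν̂. Let γ₁ ≥ γ₂ ≥ ⋯ ≥ γ_{N−k} ≥ 0 be integers satisfying: (i) μ̂ᵢ ≤ γᵢ ≤ μ̂ᵢ + k and ν̂ᵢ ≤ γᵢ ≤ ν̂ᵢ + k for all 1 ≤ i ≤ N−k; (ii) γ₁ + ⋯ + γ_{s+1} ≤ (μ̂₁ + ⋯ + μ̂_{s+1}) + (ν̂₁ + ⋯ + ν̂_{s+1}); (iii) γ_{N−2k+s+1} + ⋯ + γ_{N−k} ≥ (μ̂_{N−2k+s+1} + ⋯ + μ̂_{N−k}) + (ν̂_{N−2k+s+1} + ⋯ + ν̂_{N−k}). Assume that either r ≠ s,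 or that r = s and |head(μ)| + |head(ν)| ≤ |tail(μ)| + |tail(ν)|. Then at least one of the following holds: (a) the sequence τ of length N defined by τᵢ = N−i for 1 ≤ i ≤ k and τ_{k+j} = (N−k+1−j) + γ_j for 1 ≤ j ≤ N−k has two equal entries; or (b) μ = ν is the full k×k square, i.e. μᵢ = νᵢ = k for all 1 ≤ i ≤ k. -/
/-- Combinatorial core of the vanishing Lemma 3.5 of the paper.
Let `k ≥ 1`, `N ≥ 2k+2`, let `μ, ν` be Young diagrams in the `k × k` square with
diagonal lengths `r = ℓ(μ)`, `s = ℓ(ν)`, and let `μ̂, ν̂` be their vertical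
`(N-2k)`-expansions, of length `N-k`. Let `γ₁ ≥ ⋯ ≥ γ_{N-k} ≥ 0` satisfy the
Littlewood–Richardson constraints (i) `μ̂ᵢ ≤ γᵢ ≤ μ̂ᵢ + k` and `ν̂ᵢ ≤ γᵢ ≤ ν̂ᵢ + k`,
(ii) `γ₁ + ⋯ + γ_{s+1} ≤ (μ̂₁ + ⋯ + μ̂_{s+1}) + (ν̂₁ + ⋯ + ν̂_{s+1})`,
(iii) `γ_{N-2k+s+1} + ⋯ + γ_{N-k} ≥ (μ̂_{N-2k+s+1} + ⋯ + μ̂_{N-k}) + (ν̂_{N-2k+s+1} + ⋯ + ν̂_{N-k})`.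
Assume either `r ≠ s`, or `r = s` and `|head μ| + |head ν| ≤ |tail μ| + |tail ν|`.
Then either (a) the sequence `τ` with `τᵢ = N - i` for `1 ≤ i ≤ k` and
`τ_{k+j} = (N-k+1-j) + γⱼ` for `1 ≤ j ≤ N-k` has two equal entries, or
(b) `μ = ν` is the full `k × k` square. (Everything is 1-indexed.) -/
theorem lr_summand_weight_singular_or_full_square
    (k N : ℕ) (hk : 1 ≤ k) (hN : 2 * k + 2 ≤ N)
    (μ ν : ℕ → ℕ)
    (hμmono : ∀ i j : ℕ, 1 ≤ i → i ≤ j → j ≤ k → μ j ≤ μ i)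
    (hμbound : ∀ i : ℕ, μ i ≤ k) (hμzero : ∀ i : ℕ, k < i → μ i = 0)
    (hνmono : ∀ i j : ℕ, 1 ≤ i → i ≤ j → j ≤ k → ν j ≤ ν i)
    (hνbound : ∀ i : ℕ, ν i ≤ k) (hνzero : ∀ i : ℕ, k < i → ν i = 0)
    (r s : ℕ)
    (hr : r = ((Finset.Icc 1 k).filter (fun i => i ≤ μ i)).card)
    (hs : s = ((Finset.Icc 1 k).filter (fun i => i ≤ ν i)).card)
    (μhat νhat : ℕ → ℕ)
    (hμhat : ∀ i : ℕ, 1 ≤ i → i ≤ N - k →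
      μhat i = if i ≤ r then μ i
        else if i ≤ r + (N - 2 * k) then r else μ (i - (N - 2 * k)))
    (hνhat : ∀ i : ℕ, 1 ≤ i → i ≤ N - k →
      νhat i = if i ≤ s then ν i
        else if i ≤ s + (N - 2 * k) then s else ν (i - (N - 2 * k)))
    (γ : ℕ → ℕ)
    (hγmono : ∀ i j : ℕ, 1 ≤ i → i ≤ j → j ≤ N - k → γ j ≤ γ i)
    (hγμ : ∀ i : ℕ, 1 ≤ i → i ≤ N - k → μhat i ≤ γ i ∧ γ i ≤ μhat i + k)
    (hγν : ∀ i : ℕ, 1 ≤ i → i ≤ N - k → νhat i ≤ γ i ∧ γ i ≤ νhat i + k)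
    (hsumTop : ∑ i ∈ Finset.Icc 1 (s + 1), γ i ≤
      (∑ i ∈ Finset.Icc 1 (s + 1), μhat i) + (∑ i ∈ Finset.Icc 1 (s + 1), νhat i))
    (hsumBot : (∑ i ∈ Finset.Icc (N - 2 * k + s + 1) (N - k), μhat i) +
        (∑ i ∈ Finset.Icc (N - 2 * k + s + 1) (N - k), νhat i) ≤
      ∑ i ∈ Finset.Icc (N - 2 * k + s + 1) (N - k), γ i)
    (hcase : r ≠ s ∨ (r = s ∧
      (∑ i ∈ Finset.Icc 1 r, (μ i - r)) + (∑ i ∈ Finset.Icc 1 s, (ν i - s)) ≤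
        (∑ i ∈ Finset.Icc (r + 1) k, μ i) + (∑ i ∈ Finset.Icc (s + 1) k, ν i)))
    (τ : ℕ → ℕ)
    (hτ1 : ∀ i : ℕ, 1 ≤ i → i ≤ k → τ i = N - i)
    (hτ2 : ∀ j : ℕ, 1 ≤ j → j ≤ N - k → τ (k + j) = (N - k + 1 - j) + γ j) :
    (∃ i j : ℕ, 1 ≤ i ∧ i < j ∧ j ≤ N ∧ τ i = τ j) ∨
      ((∀ i : ℕ, 1 ≤ i → i ≤ k → μ i = k) ∧ (∀ i : ℕ, 1 ≤ i → i ≤ k → ν i = k)) := by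
  by_cases hsing : ∃ i j : ℕ, 1 ≤ i ∧ i < j ∧ j ≤ N ∧ τ i = τ j
  · exact Or.inl hsing
  right
  have hrk : r ≤ k := by
    rw [hr]
    calc ((Finset.Icc 1 k).filter (fun i => i ≤ μ i)).card
        ≤ (Finset.Icc 1 k).card := Finset.card_filter_le _ _
      _ = k := by rw [Nat.card_Icc, Nat.add_sub_cancel]
  have hsk : s ≤ k := by
    rw [hs]
    calc ((Finset.Icc 1 k).filter (fun i => i ≤ ν i)).card
        ≤ (Finset.Icc 1 k).card := Finset.card_filter_le _ _
      _ = k := by rw [Nat.card_Icc, Nat.add_sub_cancel]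
  have hrge : ∀ i : ℕ, 1 ≤ i → i ≤ k → i ≤ μ i → i ≤ r := by
    intro i h1 h2 h3
    rw [hr]
    have hsub : Finset.Icc 1 i ⊆ (Finset.Icc 1 k).filter (fun j => j ≤ μ j) := by
      intro j hj
      rw [Finset.mem_Icc] at hj
      rw [Finset.mem_filter, Finset.mem_Icc]
      exact ⟨⟨hj.1, le_trans hj.2 h2⟩,
        le_trans (le_trans hj.2 h3) (hμmono j i hj.1 hj.2 h2)⟩
    calc i = (Finset.Icc 1 i).card := by rw [Nat.card_Icc, Nat.add_sub_cancel]
      _ ≤ _ := Finset.card_le_card hsub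
  -- band-avoidance dichotomy
  have hband : ∀ j : ℕ, 1 ≤ j → j ≤ N - k → γ j + 2 ≤ j ∨ j + k ≤ γ j + 1 := by
    intro j h1 h2
    by_contra hc
    push_neg at hc
    obtain ⟨hc1, hc2⟩ := hc
    apply hsing
    refine ⟨j + k - 1 - γ j, k + j, by omega, by omega, by omega, ?_⟩
    rw [hτ1 _ (by omega) (by omega), hτ2 j h1 h2]
    omega
  have hν1 : νhat (s + 1) = s := by
    rw [hνhat (s + 1) (by omega) (by omega), if_neg (by omega), if_pos (by omega)]
  have hγνs1 := hγν (s + 1) (by omega) (by omega)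
  have hγs1 : γ (s + 1) = s + k := by
    rcases hband (s + 1) (by omega) (by omega) with h | h <;> omega
  have hγs2 : γ (s + 2) ≤ s := by
    have hm := hγmono (s + 1) (s + 2) (by omega) (by omega) (by omega)
    rcases hband (s + 2) (by omega) (by omega) with h | h <;> omega
  have hrs : r = s := by
    rcases Nat.lt_trichotomy r s with h | h | h
    · -- r < s : impossible
      have hμub := (hγμ (s + 1) (by omega) (by omega)).2
      rcases le_or_gt (s + 1) (r + (N - 2 * k)) with hc | hc
      · have hμ1 : μhat (s + 1) = r := by
          rw [hμhat (s + 1) (by omega) (by omega), if_neg (by omega), if_pos hc]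
        omega
      · have hμ1 : μhat (s + 1) = μ (s + 1 - (N - 2 * k)) := by
          rw [hμhat (s + 1) (by omega) (by omega), if_neg (by omega), if_neg (by omega)]
        rw [hμ1] at hμub
        have hi0 := hrge (s + 1 - (N - 2 * k)) (by omega) (by omega) (by omega)
        omega
    · exact h
    · -- s < r : impossible
      have hμ1 : μhat (r + 1) = r := by
        rw [hμhat (r + 1) (by omega) (by omega), if_neg (by omega), if_pos (by omega)]
      have h2 := (hγμ (r + 1) (by omega) (by omega)).1
      have h3 := hγmono (s + 2) (r + 1) (by omega) (by omega) (by omega)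
      omega
  subst hrs
  obtain hht : (∑ i ∈ Finset.Icc 1 r, (μ i - r)) + (∑ i ∈ Finset.Icc 1 r, (ν i - r)) ≤
      (∑ i ∈ Finset.Icc (r + 1) k, μ i) + (∑ i ∈ Finset.Icc (r + 1) k, ν i) := by
    rcases hcase with h | ⟨-, h⟩
    · exact absurd rfl h
    · exact h
  -- top sums
  have htopμ : ∑ i ∈ Finset.Icc 1 (r + 1), μhat i = (∑ i ∈ Finset.Icc 1 r, μ i) + r := by
    rw [Finset.sum_Icc_succ_top (by omega : 1 ≤ r + 1)]
    congr 1
    · refine Finset.sum_congr rfl fun i hi => ?_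
      rw [Finset.mem_Icc] at hi
      rw [hμhat i hi.1 (by omega), if_pos hi.2]
    · rw [hμhat (r + 1) (by omega) (by omega), if_neg (by omega), if_pos (by omega)]
  have htopν : ∑ i ∈ Finset.Icc 1 (r + 1), νhat i = (∑ i ∈ Finset.Icc 1 r, ν i) + r := by
    rw [Finset.sum_Icc_succ_top (by omega : 1 ≤ r + 1), hν1]
    congr 1
    refine Finset.sum_congr rfl fun i hi => ?_
    rw [Finset.mem_Icc] at hi
    rw [hνhat i hi.1 (by omega), if_pos hi.2]
  have htopγ : (r + 1) * (r + k) ≤ ∑ i ∈ Finset.Icc 1 (r + 1), γ i := by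
    calc (r + 1) * (r + k) = ∑ _i ∈ Finset.Icc 1 (r + 1), (r + k) := by
          rw [Finset.sum_const, Nat.card_Icc, Nat.add_sub_cancel, smul_eq_mul]
      _ ≤ ∑ i ∈ Finset.Icc 1 (r + 1), γ i := by
          refine Finset.sum_le_sum fun i hi => ?_
          rw [Finset.mem_Icc] at hi
          have := hγmono i (r + 1) hi.1 hi.2 (by omega)
          omega
  have I1 : (r + 1) * (r + k) ≤
      (∑ i ∈ Finset.Icc 1 r, μ i) + (∑ i ∈ Finset.Icc 1 r, ν i) + 2 * r := by
    have h := hsumTop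
    rw [htopμ, htopν] at h
    linarith
  -- head bounds
  have I2μ : ∑ i ∈ Finset.Icc 1 r, μ i ≤ (∑ i ∈ Finset.Icc 1 r, (μ i - r)) + r * r := by
    calc ∑ i ∈ Finset.Icc 1 r, μ i ≤ ∑ i ∈ Finset.Icc 1 r, ((μ i - r) + r) :=
          Finset.sum_le_sum fun i _ => by omega
      _ = (∑ i ∈ Finset.Icc 1 r, (μ i - r)) + r * r := by
          rw [Finset.sum_add_distrib, Finset.sum_const, Nat.card_Icc, Nat.add_sub_cancel, smul_eq_mul]
  have I2ν : ∑ i ∈ Finset.Icc 1 r, ν i ≤ (∑ i ∈ Finset.Icc 1 r, (ν i - r)) + r * r := by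
    calc ∑ i ∈ Finset.Icc 1 r, ν i ≤ ∑ i ∈ Finset.Icc 1 r, ((ν i - r) + r) :=
          Finset.sum_le_sum fun i _ => by omega
      _ = (∑ i ∈ Finset.Icc 1 r, (ν i - r)) + r * r := by
          rw [Finset.sum_add_distrib, Finset.sum_const, Nat.card_Icc, Nat.add_sub_cancel, smul_eq_mul]
  -- bottom sums: reindexing
  have hre : ∀ (ph p : ℕ → ℕ), (∀ i : ℕ, N - 2 * k + r + 1 ≤ i → i ≤ N - k →
        ph i = p (i - (N - 2 * k))) →
      ∑ i ∈ Finset.Icc (N - 2 * k + r + 1) (N - k), ph i = ∑ i ∈ Finset.Icc (r + 1) k, p i := by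
    intro ph p hp
    refine Finset.sum_nbij' (fun i => i - (N - 2 * k)) (fun i => i + (N - 2 * k))
      ?_ ?_ ?_ ?_ ?_ <;>
      intro a ha <;> rw [Finset.mem_Icc] at ha
    · show a - (N - 2 * k) ∈ Finset.Icc (r + 1) k
      rw [Finset.mem_Icc]; omega
    · show a + (N - 2 * k) ∈ Finset.Icc (N - 2 * k + r + 1) (N - k)
      rw [Finset.mem_Icc]; omega
    · show a - (N - 2 * k) + (N - 2 * k) = a
      omega
    · show a + (N - 2 * k) - (N - 2 * k) = a
      omega
    · show ph a = p (a - (N - 2 * k))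
      exact hp a ha.1 ha.2
  have hbotμ : ∑ i ∈ Finset.Icc (N - 2 * k + r + 1) (N - k), μhat i =
      ∑ i ∈ Finset.Icc (r + 1) k, μ i := by
    refine hre _ _ fun i h1 h2 => ?_
    rw [hμhat i (by omega) h2, if_neg (by omega), if_neg (by omega)]
  have hbotν : ∑ i ∈ Finset.Icc (N - 2 * k + r + 1) (N - k), νhat i =
      ∑ i ∈ Finset.Icc (r + 1) k, ν i := by
    refine hre _ _ fun i h1 h2 => ?_
    rw [hνhat i (by omega) h2, if_neg (by omega), if_neg (by omega)]
  have hbotγ : ∑ i ∈ Finset.Icc (N - 2 * k + r + 1) (N - k), γ i ≤ (k - r) * r := by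
    calc ∑ i ∈ Finset.Icc (N - 2 * k + r + 1) (N - k), γ i
        ≤ ∑ _i ∈ Finset.Icc (N - 2 * k + r + 1) (N - k), r := by
          refine Finset.sum_le_sum fun i hi => ?_
          rw [Finset.mem_Icc] at hi
          have := hγmono (r + 2) i (by omega) (by omega) hi.2
          omega
      _ = (k - r) * r := by
          rw [Finset.sum_const, Nat.card_Icc, smul_eq_mul]
          congr 1
          omega
  have I3 : (∑ i ∈ Finset.Icc (r + 1) k, μ i) + (∑ i ∈ Finset.Icc (r + 1) k, ν i) ≤
      (k - r) * r := by
    have h := hsumBot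
    rw [hbotμ, hbotν] at h
    linarith
  -- conclude r = k
  have hks : r = k := by
    obtain ⟨d, hd⟩ : ∃ d, k = r + d := ⟨k - r, by omega⟩
    have hkr : (k - r) * r = d * r := by congr 1; omega
    rw [hkr] at I3
    rw [hd] at I1
    have hfin : (r + 1) * (r + (r + d)) ≤ d * r + r * r + r * r + 2 * r := by
      linarith
    have hexp : (r + 1) * (r + (r + d)) = r * r + r * r + r * d + 2 * r + d := by ring
    have hds : r * d = d * r := Nat.mul_comm r d
    omega
  constructor <;> intro i h1 h2
  · have hγi := hγmono i (r + 1) h1 (by omega) (by omega)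
    have hμi : μhat i = μ i := by
      rw [hμhat i h1 (by omega), if_pos (by omega)]
    have := (hγμ i h1 (by omega)).2
    have := hμbound i
    omega
  · have hγi := hγmono i (r + 1) h1 (by omega) (by omega)
    have hνi : νhat i = ν i := by
      rw [hνhat i h1 (by omega), if_pos (by omega)]
    have := (hγν i h1 (by omega)).2
    have := hνbound i
    omega
end
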